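/- Define the jamming threshold J_TH = Z_n·Σ_{j=1}^n (Z_j^{−1} − Z_{j−1}^{−1})·J_j. Then J_TH < J_max; the jammer strategy y* defined by y*_0 = Z_n/Z_0 and y*_j = Z_n·(Z_j^{−1} − Z_{j−1}^{−1}) for 1 ≤ j ≤ n is a mixed strategy with average power Σ_{j=0}^n y*_j J_j = J_TH; for every transmitter mixed strategy x, xᵀZy* ≤ Z_n; and for the pure transmitter strategy x* = e_n (the unit vector at index n) and every jammer mixed strategy y, x*ᵀZy = Z_n. Consequently, for every J_ave ≥ J_TH the value of the constrained game with budget J_ave equals Z_n. -/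

import Mathlib

/-! Against the jammer strategy `y*` the cumulative masses telescope, `∑_{j ≤ i} y*_j = Z_n / Z_i`,
so every row `i` of the lower-triangular matrix earns exactly `Z_n`: `y*` equalizes the
transmitter's pure strategies. Row `n` is constant equal to `Z_n`, so `e_n` earns `Z_n` against
every jammer. Hence `(e_n, y*)` is a saddle point with value `Z_n` as soon as `y*` is affordable,
i.e. `J_ave ≥ J_TH`, the average power of `y*`; and `J_TH < J_max` because `y*` puts the positive
mass `Z_n / Z_0` on the zero power level. -/

open Finset

/-- A mixed strategy on `{0, …, n}`: nonnegative entries summing to 1. -/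
def IsMixed (n : ℕ) (x : ℕ → ℝ) : Prop :=
  (∀ i ∈ Finset.range (n + 1), 0 ≤ x i) ∧ ∑ i ∈ Finset.range (n + 1), x i = 1

/-- Expected payoff `xᵀ Z y` for the lower-triangular payoff matrix `Z(i,j) = Zᵢ` if `j ≤ i`,
`0` otherwise. -/
noncomputable def pay (n : ℕ) (Z : ℕ → ℝ) (x y : ℕ → ℝ) : ℝ :=
  ∑ i ∈ Finset.range (n + 1), ∑ j ∈ Finset.range (n + 1),
    x i * (if j ≤ i then Z i else 0) * y j

/-- The average jamming power of the strategy `y`. -/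
noncomputable def avgPow (n : ℕ) (J y : ℕ → ℝ) : ℝ :=
  ∑ j ∈ Finset.range (n + 1), y j * J j

/-- The jammer's feasible set: mixed strategies of average power at most `Jave`. -/
def YLE (n : ℕ) (J : ℕ → ℝ) (Jave : ℝ) (y : ℕ → ℝ) : Prop :=
  IsMixed n y ∧ avgPow n J y ≤ Jave

/-- The critical average jamming power `J_{ave,m} = Z_m ∑_{j=1}^m (Z_j⁻¹ - Z_{j-1}⁻¹) J_j`. -/
noncomputable def JaveM (m : ℕ) (J Z : ℕ → ℝ) : ℝ :=
  Z m * ∑ j ∈ Finset.Icc 1 m, ((Z j)⁻¹ - (Z (j - 1))⁻¹) * J j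

section

variable {n : ℕ} {Z : ℕ → ℝ}

theorem pay_eq_sum_mul_sum_range (x y : ℕ → ℝ) :
    pay n Z x y = ∑ i ∈ range (n + 1), x i * Z i * ∑ j ∈ range (i + 1), y j := by
  refine sum_congr rfl fun i hi => ?_
  have hfilter : (range (n + 1)).filter (· ≤ i) = range (i + 1) := by
    ext j; simp only [mem_filter, mem_range] at hi ⊢; omega
  simp_rw [mul_ite, ite_mul, mul_zero, zero_mul]
  rw [← sum_filter, hfilter, mul_sum]

theorem pay_eq_of_mul_sum_range_eq {x y : ℕ → ℝ} {c : ℝ} (hx : IsMixed n x)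
    (hy : ∀ i ≤ n, Z i * ∑ j ∈ range (i + 1), y j = c) : pay n Z x y = c := by
  rw [pay_eq_sum_mul_sum_range]
  calc ∑ i ∈ range (n + 1), x i * Z i * ∑ j ∈ range (i + 1), y j
      = ∑ i ∈ range (n + 1), x i * c :=
        sum_congr rfl fun i hi => by rw [mul_assoc, hy i (mem_range_succ_iff.mp hi)]
    _ = c := by rw [← sum_mul, hx.2, one_mul]

theorem isMixed_single : IsMixed n (Pi.single n 1) := by
  refine ⟨fun i _ => ?_, ?_⟩
  · rw [Pi.single_apply]; split_ifs <;> norm_num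
  · rw [sum_pi_single' n 1, if_pos (self_mem_range_succ n)]

theorem pay_single_self {y : ℕ → ℝ} (hy : IsMixed n y) : pay n Z (Pi.single n 1) y = Z n := by
  rw [pay_eq_sum_mul_sum_range, sum_eq_single_of_mem n (self_mem_range_succ n)
    fun i _ hi => by rw [Pi.single_eq_of_ne hi, zero_mul, zero_mul], hy.2]
  simp

theorem avgPow_lt_of_isMixed {J y : ℕ → ℝ} (hy : IsMixed n y) (hJ : MonotoneOn J (Set.Iic n))
    {k : ℕ} (hk : k ≤ n) (hyk : 0 < y k) (hJk : J k < J n) : avgPow n J y < J n :=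
  calc avgPow n J y < ∑ j ∈ range (n + 1), y j * J n := by
        refine sum_lt_sum (fun j hj => ?_) ⟨k, mem_range_succ_iff.mpr hk, ?_⟩
        · exact mul_le_mul_of_nonneg_left
            (hJ (Set.mem_Iic.mpr (mem_range_succ_iff.mp hj)) Set.self_mem_Iic
              (mem_range_succ_iff.mp hj)) (hy.1 j hj)
        · exact mul_lt_mul_of_pos_left hJk hyk
    _ = J n := by rw [← sum_mul, hy.2, one_mul]

end

noncomputable def equalizingStrategy (n : ℕ) (Z : ℕ → ℝ) (j : ℕ) : ℝ :=
  if j = 0 then Z n / Z 0 else if j ≤ n then Z n * ((Z j)⁻¹ - (Z (j - 1))⁻¹) else 0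

section

variable {n : ℕ} {Z : ℕ → ℝ}

theorem sum_range_equalizingStrategy {i : ℕ} (hi : i ≤ n) :
    ∑ j ∈ range (i + 1), equalizingStrategy n Z j = Z n / Z i := by
  have hsucc : ∀ j ∈ range i,
      equalizingStrategy n Z (j + 1) = Z n * ((Z (j + 1))⁻¹ - (Z j)⁻¹) := fun j hj => by
    rw [equalizingStrategy, if_neg j.succ_ne_zero, if_pos (by rw [mem_range] at hj; omega),
      Nat.add_sub_cancel]
  rw [sum_range_succ', sum_congr rfl hsucc, ← mul_sum, sum_range_sub fun j => (Z j)⁻¹,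
    equalizingStrategy, if_pos rfl]
  ring

theorem pay_equalizingStrategy {x : ℕ → ℝ} (hx : IsMixed n x) (hZ : ∀ i ≤ n, Z i ≠ 0) :
    pay n Z x (equalizingStrategy n Z) = Z n :=
  pay_eq_of_mul_sum_range_eq hx fun i hi => by
    rw [sum_range_equalizingStrategy hi, mul_div_cancel₀ _ (hZ i hi)]

theorem equalizingStrategy_zero_pos (hZ : AntitoneOn Z (Set.Iic n)) (hZn : 0 < Z n) :
    0 < equalizingStrategy n Z 0 :=
  div_pos hZn (hZn.trans_le (hZ (Set.mem_Iic.mpr n.zero_le) Set.self_mem_Iic n.zero_le))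

theorem equalizingStrategy_nonneg (hZ : AntitoneOn Z (Set.Iic n)) (hZn : 0 < Z n) (j : ℕ) :
    0 ≤ equalizingStrategy n Z j := by
  rcases Nat.eq_zero_or_pos j with rfl | hj
  · exact (equalizingStrategy_zero_pos hZ hZn).le
  rw [equalizingStrategy, if_neg hj.ne']
  split_ifs with hjn
  · have hZj : 0 < Z j := hZn.trans_le (hZ (Set.mem_Iic.mpr hjn) Set.self_mem_Iic hjn)
    have hpred : Z j ≤ Z (j - 1) :=
      hZ (Set.mem_Iic.mpr (by omega)) (Set.mem_Iic.mpr hjn) (by omega)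
    exact mul_nonneg hZn.le (sub_nonneg.mpr (inv_anti₀ hZj hpred))
  · exact le_rfl

theorem isMixed_equalizingStrategy (hZ : AntitoneOn Z (Set.Iic n)) (hZn : 0 < Z n) :
    IsMixed n (equalizingStrategy n Z) :=
  ⟨fun j _ => equalizingStrategy_nonneg hZ hZn j, by
    rw [sum_range_equalizingStrategy le_rfl, div_self hZn.ne']⟩

theorem avgPow_equalizingStrategy {J : ℕ → ℝ} (hJ0 : J 0 = 0) :
    avgPow n J (equalizingStrategy n Z) = JaveM n J Z := by
  have hIcc : ∀ j ∈ Icc 1 n, equalizingStrategy n Z j = Z n * ((Z j)⁻¹ - (Z (j - 1))⁻¹) :=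
    fun j hj => by
      rw [mem_Icc] at hj
      rw [equalizingStrategy, if_neg (by omega), if_pos hj.2]
  have hsub : Icc 1 n ⊆ range (n + 1) := fun j hj => by
    rw [mem_Icc] at hj; rw [mem_range]; omega
  rw [JaveM, mul_sum, avgPow, ← sum_subset hsub fun j hj hj' => ?_]
  · exact sum_congr rfl fun j hj => by rw [hIcc j hj, mul_assoc]
  · obtain rfl : j = 0 := by rw [mem_range] at hj; rw [mem_Icc] at hj'; omega
    rw [hJ0, mul_zero]

end

/-- the jamming threshold `J_TH = Z_n ∑_{j=1}^n (Z_j⁻¹ - Z_{j-1}⁻¹) J_j`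
satisfies `J_TH < J_max`; the strategy `y*` is mixed with average power `J_TH` and forces
payoff at most `Z_n`; the pure strategy `x* = e_n` guarantees exactly `Z_n`; hence for every
budget `J_ave ≥ J_TH` the value of the constrained game equals `Z_n`. -/
theorem stmt_10 (n : ℕ) (hn : 1 ≤ n) (J Z : ℕ → ℝ)
    (hJ0 : J 0 = 0) (hJmono : ∀ j < n, J j < J (j + 1))
    (hZanti : ∀ j < n, Z (j + 1) < Z j) (hZpos : 0 < Z n)
    (JTH : ℝ)
    (hT : JTH = Z n * ∑ j ∈ Finset.Icc 1 n, ((Z j)⁻¹ - (Z (j - 1))⁻¹) * J j)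
    (ystar xstar : ℕ → ℝ)
    (hys : ∀ j, ystar j = if j = 0 then Z n / Z 0
      else if j ≤ n then Z n * ((Z j)⁻¹ - (Z (j - 1))⁻¹) else 0)
    (hxs : ∀ i, xstar i = if i = n then 1 else 0) :
    JTH < J n ∧
    IsMixed n ystar ∧
    avgPow n J ystar = JTH ∧
    (∀ x : ℕ → ℝ, IsMixed n x → pay n Z x ystar ≤ Z n) ∧
    (∀ y : ℕ → ℝ, IsMixed n y → pay n Z xstar y = Z n) ∧
    (∀ Jave : ℝ, JTH ≤ Jave →
      ∃ xs ys : ℕ → ℝ, IsMixed n xs ∧ YLE n J Jave ys ∧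
        pay n Z xs ys = Z n ∧
        (∀ x : ℕ → ℝ, IsMixed n x → pay n Z x ys ≤ Z n) ∧
        (∀ y : ℕ → ℝ, YLE n J Jave y → Z n ≤ pay n Z xs y)) := by
  obtain rfl : ystar = equalizingStrategy n Z := funext hys
  obtain rfl : xstar = Pi.single n 1 := funext fun i => by rw [hxs, Pi.single_apply]
  have hZ : StrictAntiOn Z (Set.Iic n) := strictAntiOn_Iic_of_succ_lt hZanti
  have hJ : StrictMonoOn J (Set.Iic n) := strictMonoOn_Iic_of_lt_succ hJmono
  have hZne : ∀ i ≤ n, Z i ≠ 0 := fun i hi =>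
    (hZpos.trans_le (hZ.antitoneOn (Set.mem_Iic.mpr hi) Set.self_mem_Iic hi)).ne'
  have hmix := isMixed_equalizingStrategy hZ.antitoneOn hZpos
  have havg : avgPow n J (equalizingStrategy n Z) = JTH := by
    rw [hT, avgPow_equalizingStrategy hJ0, JaveM]
  have hforce x (hx : IsMixed n x) := pay_equalizingStrategy hx hZne
  have hguar y (hy : IsMixed n y) : pay n Z (Pi.single n 1) y = Z n := pay_single_self hy
  have hlt : JTH < J n := havg ▸ avgPow_lt_of_isMixed hmix hJ.monotoneOn n.zero_le
    (equalizingStrategy_zero_pos hZ.antitoneOn hZpos)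
    (hJ (Set.mem_Iic.mpr n.zero_le) Set.self_mem_Iic hn)
  refine ⟨hlt, hmix, havg, fun x hx => (hforce x hx).le, hguar, fun Jave hJave => ?_⟩
  exact ⟨_, _, isMixed_single, ⟨hmix, havg ▸ hJave⟩, hguar _ hmix,
    fun x hx => (hforce x hx).le, fun y hy => (hguar y hy.1).ge⟩
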